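/- arXiv:2106.05138 — 7 statements merged into one kernel-verified Lean document; each statement's English description precedes it below -/
import Mathlib

section
/- Let (e_n) for n ≥ 1 be a sequence of positive reals, and let μ > 0, δ > 0 satisfy e_n ≤ (μ/n) · Σ_{i=1}^{n-1} e_i + δ for all n ≥ 1. Then for all n ≥ 1, e_n ≤ δ · f_n, where f_n = (Γ(n+μ)/n!) · Σ_{k=0}^{n-1} k!/Γ(k+1+μ). -/
open Finset

noncomputable def fAux (μ : ℝ) (n : ℕ) : ℝ :=
  Real.Gamma (n + μ) / (Nat.factorial n) *
    ∑ k ∈ Finset.range n, (Nat.factorial k : ℝ) / Real.Gamma (k + 1 + μ)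

lemma fAux_rec (μ : ℝ) (hμ : 0 < μ) (n : ℕ) :
    ((n : ℝ) + 1) * fAux μ (n + 1) = μ * (∑ i ∈ Finset.Icc 1 n, fAux μ i) + ((n : ℝ) + 1) := by
  induction n with
  | zero =>
      simp [fAux]
      have h1 : Real.Gamma (1 + μ) ≠ 0 :=
        ne_of_gt (Real.Gamma_pos_of_pos (by linarith))
      field_simp
  | succ n ih =>
      have hsum : ∑ i ∈ Finset.Icc 1 (n + 1), fAux μ i =
          (∑ i ∈ Finset.Icc 1 n, fAux μ i) + fAux μ (n + 1) := by
        rw [Finset.sum_Icc_succ_top (by omega)]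
      rw [hsum]
      have key : ((n : ℝ) + 2) * fAux μ (n + 2) = ((n : ℝ) + 1 + μ) * fAux μ (n + 1) + 1 := by
        have hg : Real.Gamma ((n : ℝ) + 2 + μ) = ((n : ℝ) + 1 + μ) * Real.Gamma ((n : ℝ) + 1 + μ) := by
          rw [show ((n : ℝ) + 2 + μ) = ((n : ℝ) + 1 + μ) + 1 by ring,
            Real.Gamma_add_one (by positivity)]
        have hgne : Real.Gamma ((n : ℝ) + 1 + μ) ≠ 0 :=
          ne_of_gt (Real.Gamma_pos_of_pos (by positivity))
        have hcast2 : ((n + 2 : ℕ) : ℝ) + μ = (n : ℝ) + 2 + μ := by push_cast; ring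
        have hcast1 : ((n + 1 : ℕ) : ℝ) + μ = (n : ℝ) + 1 + μ := by push_cast; ring
        simp only [fAux, Finset.sum_range_succ (n := n + 1), hcast2, hcast1]
        have hfact : ((n + 2).factorial : ℝ) = ((n : ℝ) + 2) * ((n + 1).factorial : ℝ) := by
          rw [Nat.factorial_succ]; push_cast; ring
        have hfactne : ((n + 1).factorial : ℝ) ≠ 0 := by positivity
        have hlast : (((n + 1 : ℕ)) : ℝ) + 1 + μ = (n : ℝ) + 2 + μ := by push_cast; ring
        rw [hlast, hg, hfact]
        field_simp
      push_cast at key ⊢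
      linarith

/-- Discrete Grönwall–Bellman-type lemma with weight μ/n. -/
theorem stmt_0 (e : ℕ → ℝ) (μ δ : ℝ) (hμ : 0 < μ) (hδ : 0 < δ)
    (hpos : ∀ n ≥ 1, 0 < e n)
    (hrec : ∀ n ≥ 1, e n ≤ (μ / n) * ∑ i ∈ Finset.Icc 1 (n - 1), e i + δ) :
    ∀ n ≥ 1, e n ≤ δ *
      (Real.Gamma (n + μ) / (Nat.factorial n) *
        ∑ k ∈ Finset.range n, (Nat.factorial k : ℝ) / Real.Gamma (k + 1 + μ)) := by
  intro n
  induction n using Nat.strong_induction_on with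
  | _ n ih =>
    intro hn
    obtain ⟨m, rfl⟩ : ∃ m, n = m + 1 := ⟨n - 1, by omega⟩
    have hfe : e (m + 1) ≤ (μ / (m + 1)) * (∑ i ∈ Finset.Icc 1 m, δ * fAux μ i) + δ := by
      have h := hrec (m + 1) (by omega)
      have hdivpos : (0 : ℝ) ≤ μ / ((m : ℝ) + 1) := by positivity
      calc e (m + 1) ≤ (μ / ((m + 1 : ℕ) : ℝ)) * ∑ i ∈ Finset.Icc 1 ((m + 1) - 1), e i + δ := h
        _ ≤ (μ / ((m : ℝ) + 1)) * (∑ i ∈ Finset.Icc 1 m, δ * fAux μ i) + δ := by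
            push_cast
            gcongr with i hi
            simp only [Finset.mem_Icc] at hi
            exact ih i (by omega) hi.1
      -- done
    rw [← Finset.mul_sum] at hfe
    have hrecf := fAux_rec μ hμ m
    have hcast : (((m + 1 : ℕ)) : ℝ) + μ = (m : ℝ) + 1 + μ := by push_cast; ring
    have : δ * (Real.Gamma (((m + 1 : ℕ)) + μ) / (Nat.factorial (m + 1)) *
        ∑ k ∈ Finset.range (m + 1), (Nat.factorial k : ℝ) / Real.Gamma (k + 1 + μ))
        = δ * fAux μ (m + 1) := rfl
    rw [this]
    have hm1 : (0 : ℝ) < (m : ℝ) + 1 := by positivity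
    have hfval : fAux μ (m + 1) = μ / ((m : ℝ) + 1) * (∑ i ∈ Finset.Icc 1 m, fAux μ i) + 1 := by
      field_simp
      linarith [hrecf]
    rw [hfval]
    calc e (m + 1) ≤ μ / ((m : ℝ) + 1) * (δ * ∑ i ∈ Finset.Icc 1 m, fAux μ i) + δ := hfe
      _ = δ * (μ / ((m : ℝ) + 1) * (∑ i ∈ Finset.Icc 1 m, fAux μ i) + 1) := by ring
end

section
/- For 0 < μ < 1, the sequence f_n = (Γ(n+μ)/n!) · Σ_{k=0}^{n-1} k!/Γ(k+1+μ) satisfies f_n ≤ 1/(1-μ) for all n ≥ 1. -/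
open Finset

theorem stmt_1 (μ : ℝ) (hμ0 : 0 < μ) (hμ1 : μ < 1) :
    ∀ n : ℕ, n ≥ 1 →
      Real.Gamma (n + μ) / (Nat.factorial n) *
        ∑ k ∈ Finset.range n, (Nat.factorial k : ℝ) / Real.Gamma (k + 1 + μ)
      ≤ 1 / (1 - μ) := by
  intro n hn
  have h1μ : (0:ℝ) < 1 - μ := by linarith
  set b : ℕ → ℝ := fun k => Real.Gamma (k + 1) / Real.Gamma (k + μ) with hb
  have hstep : ∀ k : ℕ, (Nat.factorial k : ℝ) / Real.Gamma (k + 1 + μ)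
      = (b (k + 1) - b k) / (1 - μ) := by
    intro k
    have hkμ : (0:ℝ) < k + μ := by positivity
    have hΓkμ : 0 < Real.Gamma ((k:ℝ) + μ) := Real.Gamma_pos_of_pos hkμ
    have h1 : Real.Gamma ((k:ℝ) + 1 + μ) = ((k:ℝ) + μ) * Real.Gamma ((k:ℝ) + μ) := by
      have := Real.Gamma_add_one (ne_of_gt hkμ)
      rw [← this]; ring_nf
    have h2 : Real.Gamma ((k:ℝ) + 1) = Nat.factorial k := by
      exact_mod_cast Real.Gamma_nat_eq_factorial k
    have h3 : Real.Gamma (((k:ℕ) + 1 : ℕ) + 1) = Nat.factorial (k + 1) := by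
      exact_mod_cast Real.Gamma_nat_eq_factorial (k + 1)
    simp only [hb]
    push_cast
    rw [h1, h2]
    have h3' : Real.Gamma ((k:ℝ) + 1 + 1) = ((k+1 : ℕ) : ℝ) * Nat.factorial k := by
      have := Real.Gamma_nat_eq_factorial (k + 1)
      push_cast at this ⊢
      rw [show (k:ℝ) + 1 + 1 = ((k:ℝ)+1) + 1 by ring, this, Nat.factorial_succ]
      push_cast; ring
    rw [show (k:ℝ) + 1 + μ = ((k:ℝ) + μ) + 1 by ring] at *
    rw [show Real.Gamma ((k:ℝ) + 1 + 1) = ((k+1 : ℕ) : ℝ) * Nat.factorial k from h3']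
    have hfac : (0:ℝ) < Nat.factorial k := by positivity
    field_simp
    push_cast
    ring
  have hsum : ∑ k ∈ Finset.range n, (Nat.factorial k : ℝ) / Real.Gamma (k + 1 + μ)
      = (b n - b 0) / (1 - μ) := by
    rw [Finset.sum_congr rfl (fun k _ => hstep k), ← Finset.sum_div,
      Finset.sum_range_sub]
  rw [hsum]
  have hnμ : (0:ℝ) < n + μ := by positivity
  have hΓnμ : 0 < Real.Gamma ((n:ℝ) + μ) := Real.Gamma_pos_of_pos hnμ
  have hfacn : (0:ℝ) < Nat.factorial n := by positivity
  have hb0 : 0 < b 0 := by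
    simp only [hb]
    have : 0 < Real.Gamma ((0:ℕ) + μ) := by
      apply Real.Gamma_pos_of_pos; push_cast; linarith
    positivity
  have hbn : b n = Nat.factorial n / Real.Gamma ((n:ℝ) + μ) := by
    simp only [hb]
    rw [show Real.Gamma ((n:ℕ) + 1) = Nat.factorial n by exact_mod_cast Real.Gamma_nat_eq_factorial n]
  have key : Real.Gamma ((n:ℝ) + μ) / (Nat.factorial n) * (b n / (1 - μ)) = 1 / (1 - μ) := by
    rw [hbn]; field_simp
  calc Real.Gamma ((n:ℝ) + μ) / (Nat.factorial n) * ((b n - b 0) / (1 - μ))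
      ≤ Real.Gamma ((n:ℝ) + μ) / (Nat.factorial n) * (b n / (1 - μ)) := by
        apply mul_le_mul_of_nonneg_left _ (by positivity)
        gcongr
        linarith
    _ = 1 / (1 - μ) := key
end

section
/- For μ = 1, the sequence f_n defined by f_1 = 1 and f_n = (1/n)·Σ_{i=1}^{n-1} f_i + 1 satisfies f_n ≤ ln n + 1 for all n ≥ 1. -/
open Finset

lemma key_log (i : ℕ) (hi : 1 ≤ i) :
    Real.log i ≤ (i + 1 : ℝ) * Real.log (i + 1) - i * Real.log i - 1 := by
  have hip : (0:ℝ) < i := by exact_mod_cast hi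
  have hip1 : (0:ℝ) < i + 1 := by linarith
  have h := Real.log_le_sub_one_of_pos (x := (i:ℝ)/(i+1)) (by positivity)
  rw [Real.log_div (ne_of_gt hip) (ne_of_gt hip1)] at h
  have : (i:ℝ)/(i+1) - 1 = -1/(i+1) := by field_simp; ring
  rw [this] at h
  rw [neg_div] at h
  have h2 : (1:ℝ)/(i+1) ≤ Real.log (i+1) - Real.log i := by linarith
  have h3 : (1:ℝ) ≤ (i+1) * (Real.log (i+1) - Real.log i) := by
    have := mul_le_mul_of_nonneg_left h2 (le_of_lt hip1)
    rw [mul_one_div, div_self (ne_of_gt hip1)] at this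
    linarith
  nlinarith [Real.log_nonneg (by exact_mod_cast hi : (1:ℝ) ≤ i)]

lemma sum_log_le (n : ℕ) (hn : 1 ≤ n) :
    ∑ i ∈ Icc 1 (n - 1), Real.log i ≤ n * Real.log n - n + 1 := by
  induction n with
  | zero => omega
  | succ m ih =>
    rcases Nat.eq_or_lt_of_le hn with h | h
    · simp [← h]
    · have hm : 1 ≤ m := by omega
      have ihm := ih hm
      have hsplit : ∑ i ∈ Icc 1 (m + 1 - 1), Real.log i =
          ∑ i ∈ Icc 1 (m - 1), Real.log i + Real.log m := by
        rw [show m + 1 - 1 = (m - 1) + 1 by omega,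
          Finset.sum_Icc_succ_top (by omega)]
        congr 2
        push_cast [Nat.sub_add_cancel hm]
        ring
      rw [hsplit]
      have hk := key_log m hm
      push_cast
      push_cast at ihm hk
      linarith

theorem stmt_2 (f : ℕ → ℝ) (h1 : f 1 = 1)
    (hrec : ∀ n : ℕ, n ≥ 1 → f n = (1 / n) * ∑ i ∈ Finset.Icc 1 (n - 1), f i + 1) :
    ∀ n : ℕ, n ≥ 1 → f n ≤ Real.log n + 1 := by
  intro n
  induction n using Nat.strong_induction_on with
  | _ n ih =>
    intro hn
    rw [hrec n hn]
    have hnp : (0:ℝ) < n := by exact_mod_cast hn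
    have hsum : ∑ i ∈ Icc 1 (n - 1), f i ≤ ∑ i ∈ Icc 1 (n - 1), (Real.log i + 1) := by
      apply Finset.sum_le_sum
      intro i hi
      simp only [Finset.mem_Icc] at hi
      exact ih i (by omega) hi.1
    have hcard : (Icc 1 (n - 1)).card = n - 1 := by
      rw [Nat.card_Icc]; omega
    have hsum2 : ∑ i ∈ Icc 1 (n - 1), (Real.log i + 1) =
        (∑ i ∈ Icc 1 (n - 1), Real.log i) + (n - 1 : ℝ) := by
      rw [Finset.sum_add_distrib, Finset.sum_const, hcard, nsmul_eq_mul,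
        Nat.cast_sub hn]
      push_cast
      ring
    have hlog := sum_log_le n hn
    have : ∑ i ∈ Icc 1 (n - 1), f i ≤ n * Real.log n - 1 + (1:ℝ) := by
      rw [hsum2] at hsum
      push_cast at hsum hlog ⊢
      linarith
    calc (1 / n : ℝ) * ∑ i ∈ Icc 1 (n - 1), f i + 1
        ≤ (1 / n) * (n * Real.log n) + 1 := by
          have h1n : (0:ℝ) < 1/n := by positivity
          nlinarith
      _ = Real.log n + 1 := by field_simp
end

section
/- The solution of the recurrence f_n = (1 + (μ-1)/n)·f_{n-1} + 1/n with f_1 = 1 is given in closed form by f_n = (Γ(n+μ)/n!) · Σ_{k=0}^{n-1} k!/Γ(k+1+μ). -/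
open Finset

theorem stmt_4 (μ : ℝ) (hμ : 0 < μ) (f : ℕ → ℝ) (h1 : f 1 = 1)
    (hrec : ∀ n : ℕ, n ≥ 2 → f n = (1 + (μ - 1) / n) * f (n - 1) + 1 / n) :
    ∀ n : ℕ, n ≥ 1 →
      f n = Real.Gamma (n + μ) / (Nat.factorial n) *
        ∑ k ∈ Finset.range n, (Nat.factorial k : ℝ) / Real.Gamma (k + 1 + μ) := by
  intro n hn
  induction n, hn using Nat.le_induction with
  | base =>
    have hG : Real.Gamma (1 + μ) ≠ 0 :=
      (Real.Gamma_pos_of_pos (by linarith)).ne'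
    simp only [Finset.sum_range_one, Nat.cast_zero, zero_add, Nat.factorial_one,
      Nat.factorial_zero, Nat.cast_one, h1]
    field_simp
  | succ n hn ih =>
    have hG : Real.Gamma ((n : ℝ) + μ) > 0 :=
      Real.Gamma_pos_of_pos (by positivity)
    have hGadd : Real.Gamma ((n : ℝ) + μ + 1) = ((n : ℝ) + μ) * Real.Gamma ((n : ℝ) + μ) :=
      Real.Gamma_add_one (by positivity)
    have hrec' := hrec (n + 1) (by omega)
    simp only [Nat.add_sub_cancel] at hrec'
    rw [hrec', ih, Finset.sum_range_succ]
    have hcast : ((n + 1 : ℕ) : ℝ) + μ = (n : ℝ) + μ + 1 := by push_cast; ring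
    rw [hcast, hGadd]
    have hfn : ((n + 1).factorial : ℝ) = ((n : ℝ) + 1) * n.factorial := by
      push_cast [Nat.factorial_succ]; ring
    have hfn0 : (n.factorial : ℝ) ≠ 0 := by positivity
    have hn1 : ((n : ℝ) + 1) ≠ 0 := by positivity
    have hGlast : Real.Gamma ((n : ℝ) + 1 + μ) = ((n : ℝ) + μ) * Real.Gamma ((n : ℝ) + μ) := by
      rw [show (n : ℝ) + 1 + μ = (n : ℝ) + μ + 1 by ring, hGadd]
    rw [hfn, hGlast]
    push_cast
    field_simp
    ring
end

section
/- For any real μ > 1, the series Σ_{k=0}^{∞} k!/Γ(k+1+μ) converges and its sum equals 1/((μ-1)·Γ(μ)). -/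
open Real Filter Finset

private lemma aux_tendsto (μ : ℝ) (hμ : 1 < μ) :
    Tendsto (fun n : ℕ => (Nat.factorial n : ℝ) / Real.Gamma (n + μ)) atTop (nhds 0) := by
  set δ : ℝ := min (μ - 1) (1/2) with hδdef
  have hδ0 : 0 < δ := lt_min (by linarith) (by norm_num)
  have hδ1 : δ < 1 := lt_of_le_of_lt (min_le_right _ _) (by norm_num)
  have hδμ : δ ≤ μ - 1 := min_le_left _ _
  have key : ∀ n : ℕ, 1 ≤ n →
      (Nat.factorial n : ℝ) / Real.Gamma (n + μ) ≤ ((n : ℝ) + δ) ^ (-δ) := by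
    intro n hn
    have hn1 : (1 : ℝ) ≤ (n : ℝ) := by exact_mod_cast hn
    have hs : (0 : ℝ) < (n : ℝ) + δ := by linarith
    have ht : (0 : ℝ) < (n : ℝ) + 1 + δ := by linarith
    have hconv := Real.Gamma_mul_add_mul_le_rpow_Gamma_mul_rpow_Gamma hs ht hδ0
      (by linarith : (0:ℝ) < 1 - δ) (by ring)
    have harg : δ * ((n : ℝ) + δ) + (1 - δ) * ((n : ℝ) + 1 + δ) = (n : ℝ) + 1 := by ring
    rw [harg] at hconv
    have hrec : Real.Gamma ((n : ℝ) + 1 + δ) = ((n : ℝ) + δ) * Real.Gamma ((n : ℝ) + δ) := by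
      have : (n : ℝ) + 1 + δ = ((n : ℝ) + δ) + 1 := by ring
      rw [this, Real.Gamma_add_one hs.ne']
    have hGsδ : 0 < Real.Gamma ((n : ℝ) + δ) := Real.Gamma_pos_of_pos hs
    have hGtδ : 0 < Real.Gamma ((n : ℝ) + 1 + δ) := Real.Gamma_pos_of_pos ht
    -- Γ(n+δ)^δ * Γ(n+1+δ)^(1-δ) = Γ(n+1+δ) * (n+δ)^(-δ)
    have heq : Real.Gamma ((n:ℝ) + δ) ^ δ * Real.Gamma ((n:ℝ) + 1 + δ) ^ (1 - δ)
        = Real.Gamma ((n:ℝ) + 1 + δ) * ((n:ℝ) + δ) ^ (-δ) := by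
      have h1 : Real.Gamma ((n:ℝ) + δ) = Real.Gamma ((n:ℝ) + 1 + δ) / ((n:ℝ) + δ) := by
        rw [hrec]; field_simp
      rw [h1, Real.div_rpow hGtδ.le hs.le, div_mul_eq_mul_div, ← Real.rpow_add hGtδ,
        Real.rpow_neg hs.le, div_eq_mul_inv]
      norm_num
    rw [heq] at hconv
    -- hconv : Γ(n+1) ≤ Γ(n+1+δ) * (n+δ)^(-δ)
    have hfact : (Nat.factorial n : ℝ) = Real.Gamma ((n : ℝ) + 1) := by
      rw [Real.Gamma_nat_eq_factorial]
    have hGμ : 0 < Real.Gamma ((n : ℝ) + μ) := Real.Gamma_pos_of_pos (by linarith)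
    have hmono : Real.Gamma ((n : ℝ) + 1 + δ) ≤ Real.Gamma ((n : ℝ) + μ) := by
      rcases eq_or_lt_of_le hδμ with h | h
      · rw [show (n:ℝ) + 1 + δ = (n:ℝ) + μ by rw [h]; ring]
      · exact le_of_lt (Real.Gamma_strictMonoOn_Ici (by simp only [Set.mem_Ici]; linarith)
          (by simp only [Set.mem_Ici]; linarith) (by linarith))
    rw [hfact, div_le_iff₀ hGμ]
    calc Real.Gamma ((n:ℝ) + 1) ≤ Real.Gamma ((n:ℝ) + 1 + δ) * ((n:ℝ) + δ) ^ (-δ) := hconv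
      _ ≤ Real.Gamma ((n:ℝ) + μ) * ((n:ℝ) + δ) ^ (-δ) := by
          gcongr
      _ = ((n:ℝ) + δ) ^ (-δ) * Real.Gamma ((n:ℝ) + μ) := by ring
  have hbound : Tendsto (fun n : ℕ => ((n : ℝ) + δ) ^ (-δ)) atTop (nhds 0) := by
    apply (tendsto_rpow_neg_atTop hδ0).comp
    exact tendsto_atTop_add_const_right _ _ tendsto_natCast_atTop_atTop
  refine squeeze_zero' ?_ ?_ hbound
  · filter_upwards with n
    have : 0 < Real.Gamma ((n:ℝ) + μ) := Real.Gamma_pos_of_pos (by positivity)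
    positivity
  · filter_upwards [eventually_ge_atTop 1] with n hn using key n hn

theorem stmt_5 (μ : ℝ) (hμ : 1 < μ) :
    HasSum (fun k : ℕ => (Nat.factorial k : ℝ) / Real.Gamma (k + 1 + μ))
      (1 / ((μ - 1) * Real.Gamma μ)) := by
  have hμ1 : (0:ℝ) < μ - 1 := by linarith
  set a : ℕ → ℝ := fun k => (Nat.factorial k : ℝ) / Real.Gamma (k + μ) with ha
  have hGpos : ∀ k : ℕ, 0 < Real.Gamma ((k:ℝ) + μ) := fun k =>
    Real.Gamma_pos_of_pos (by positivity)
  have hG1pos : ∀ k : ℕ, 0 < Real.Gamma ((k:ℝ) + 1 + μ) := fun k =>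
    Real.Gamma_pos_of_pos (by positivity)
  have hrec : ∀ k : ℕ, Real.Gamma ((k:ℝ) + 1 + μ) = ((k:ℝ) + μ) * Real.Gamma ((k:ℝ) + μ) := by
    intro k
    have h1 : (k:ℝ) + 1 + μ = ((k:ℝ) + μ) + 1 := by ring
    rw [h1, Real.Gamma_add_one (by positivity : ((k:ℝ) + μ) ≠ 0)]
  have htel : ∀ k : ℕ, (Nat.factorial k : ℝ) / Real.Gamma (k + 1 + μ)
      = (a k - a (k + 1)) / (μ - 1) := by
    intro k
    have hcast : ((k + 1 : ℕ) : ℝ) = (k : ℝ) + 1 := by push_cast; ring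
    simp only [ha, hcast, Nat.factorial_succ, Nat.cast_mul]
    rw [hrec k]
    have h1 : ((k:ℝ) + μ) ≠ 0 := by positivity
    have h2 : Real.Gamma ((k:ℝ) + μ) ≠ 0 := (hGpos k).ne'
    field_simp
    push_cast
    ring
  have ha0 : a 0 = 1 / Real.Gamma μ := by
    simp [ha]
  have hnonneg : ∀ k : ℕ, 0 ≤ (Nat.factorial k : ℝ) / Real.Gamma ((k:ℝ) + 1 + μ) := by
    intro k
    have := hG1pos k
    positivity
  rw [hasSum_iff_tendsto_nat_of_nonneg hnonneg]
  have hps : ∀ n : ℕ, ∑ i ∈ Finset.range n, (Nat.factorial i : ℝ) / Real.Gamma (i + 1 + μ)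
      = (a 0 - a n) / (μ - 1) := by
    intro n
    rw [← Finset.sum_range_sub' a n]
    rw [Finset.sum_div]
    exact Finset.sum_congr rfl fun i _ => htel i
  simp only [hps]
  have := aux_tendsto μ hμ
  have hlim : Tendsto (fun n : ℕ => (a 0 - a n) / (μ - 1)) atTop
      (nhds ((a 0 - 0) / (μ - 1))) := (tendsto_const_nhds.sub this).div_const _
  have hv : 1 / ((μ - 1) * Real.Gamma μ) = (a 0 - 0) / (μ - 1) := by
    rw [ha0, sub_zero, div_div, mul_comm]
  rw [hv]
  exact hlim
end

section
/- For any real μ > 1 and natural k, the ratio k!/Γ(k+1+μ) is asymptotically equivalent to k^{-μ} as k → ∞. -/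
open Filter

lemma gamma_add_nat_eq (μ : ℝ) (hμ : 0 < μ) (n : ℕ) :
    Real.Gamma (μ + n) = Real.Gamma μ * ∏ j ∈ Finset.range n, (μ + j) := by
  induction n with
  | zero => simp
  | succ n ih =>
      have h : μ + (n : ℝ) ≠ 0 := by positivity
      have : Real.Gamma (μ + (n + 1 : ℕ)) = (μ + n) * Real.Gamma (μ + n) := by
        rw [show (μ + (n + 1 : ℕ) : ℝ) = (μ + n) + 1 by push_cast; ring,
          Real.Gamma_add_one h]
      rw [this, ih, Finset.prod_range_succ]; ring

theorem stmt_6 (μ : ℝ) (hμ : 1 < μ) :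
    Tendsto (fun k : ℕ =>
      ((Nat.factorial k : ℝ) / Real.Gamma (k + 1 + μ)) / (k : ℝ) ^ (-μ))
      atTop (nhds 1) := by
  have hμ0 : 0 < μ := lt_trans one_pos hμ
  have hΓ : Real.Gamma μ ≠ 0 := (Real.Gamma_pos_of_pos hμ0).ne'
  have key : Tendsto (fun k : ℕ => Real.GammaSeq μ k / Real.Gamma μ) atTop (nhds 1) := by
    have := (Real.GammaSeq_tendsto_Gamma μ).div_const (Real.Gamma μ)
    rwa [div_self hΓ] at this
  refine key.congr' ?_
  filter_upwards [eventually_ge_atTop 1] with k hk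
  have hk0 : (0:ℝ) < (k:ℝ) := by exact_mod_cast hk
  have hprod : ∀ j ∈ Finset.range (k+1), μ + (j:ℝ) ≠ 0 := fun j _ => by positivity
  have hΓk : Real.Gamma ((k:ℝ) + 1 + μ) =
      Real.Gamma μ * ∏ j ∈ Finset.range (k+1), (μ + j) := by
    rw [show ((k:ℝ) + 1 + μ) = μ + ((k+1 : ℕ) : ℝ) by push_cast; ring]
    exact gamma_add_nat_eq μ hμ0 (k+1)
  have hp : (∏ j ∈ Finset.range (k+1), (μ + (j:ℝ))) ≠ 0 :=
    Finset.prod_ne_zero_iff.mpr hprod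
  have hkp : ((k:ℝ) ^ μ) ≠ 0 := by positivity
  rw [Real.GammaSeq, hΓk, Real.rpow_neg hk0.le]
  field_simp
end

section
/- For real μ > 1, the sequence f_n = (Γ(n+μ)/n!) · Σ_{k=0}^{n-1} k!/Γ(k+1+μ) satisfies f_n ~ n^{μ-1}/((μ-1)·Γ(μ)) as n → ∞. -/
open Filter Finset

private lemma gamma_pos_nat (μ : ℝ) (hμ : 1 < μ) (n : ℕ) : 0 < Real.Gamma (n + μ) :=
  Real.Gamma_pos_of_pos (by positivity)

private lemma telescope (μ : ℝ) (hμ : 1 < μ) (n : ℕ) :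
    ∑ k ∈ Finset.range n, (Nat.factorial k : ℝ) / Real.Gamma (k + 1 + μ) =
      (1 / Real.Gamma μ - (Nat.factorial n : ℝ) / Real.Gamma (n + μ)) / (μ - 1) := by
  induction n with
  | zero => simp
  | succ n ih =>
    rw [Finset.sum_range_succ, ih]
    have h1 : ((n : ℝ) + 1 + μ) = ((n : ℝ) + μ) + 1 := by ring
    have h2 : Real.Gamma ((n : ℝ) + 1 + μ) = ((n : ℝ) + μ) * Real.Gamma (n + μ) := by
      rw [h1, Real.Gamma_add_one (by positivity)]
    have hΓ := gamma_pos_nat μ hμ n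
    have hc : ((n + 1 : ℕ) : ℝ) + μ = (n : ℝ) + 1 + μ := by push_cast; ring
    have hfact : ((Nat.factorial (n + 1) : ℝ)) = ((n : ℝ) + 1) * Nat.factorial n := by
      push_cast [Nat.factorial_succ]; ring
    rw [hc, h2, hfact]
    have hμ1 : μ - 1 ≠ 0 := by linarith
    have hnμ : (n : ℝ) + μ ≠ 0 := by positivity
    field_simp
    ring

private lemma gamma_prod (μ : ℝ) (hμ : 1 < μ) (n : ℕ) :
    Real.Gamma (n + μ) = Real.Gamma μ * ∏ j ∈ Finset.range n, (μ + j) := by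
  induction n with
  | zero => simp
  | succ n ih =>
    have hc : ((n + 1 : ℕ) : ℝ) + μ = ((n : ℝ) + μ) + 1 := by push_cast; ring
    rw [hc, Real.Gamma_add_one (by positivity), ih, Finset.prod_range_succ]
    ring

private lemma tendsto_h (μ : ℝ) (hμ : 1 < μ) :
    Tendsto (fun n : ℕ => Real.Gamma (n + μ) / ((Nat.factorial n : ℝ) * (n : ℝ) ^ (μ - 1)))
      atTop (nhds 1) := by
  have hΓμ : Real.Gamma μ ≠ 0 := ne_of_gt (Real.Gamma_pos_of_pos (by linarith))
  have key : Tendsto (fun n : ℕ => Real.Gamma μ * (((n : ℝ) / (μ + n)) / Real.GammaSeq μ n))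
      atTop (nhds 1) := by
    have h1 : Tendsto (fun n : ℕ => (n : ℝ) / (μ + n)) atTop (nhds 1) := by
      have h2 : Tendsto (fun n : ℕ => 1 - μ / (μ + n)) atTop (nhds (1 - 0)) := by
        apply tendsto_const_nhds.sub
        exact Tendsto.div_atTop tendsto_const_nhds
          (tendsto_atTop_add_const_left _ μ tendsto_natCast_atTop_atTop)
      have h3 : ∀ᶠ n : ℕ in atTop, 1 - μ / (μ + n) = (n : ℝ) / (μ + n) := by
        filter_upwards [eventually_gt_atTop 0] with n hn
        have : μ + (n : ℝ) ≠ 0 := by positivity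
        field_simp
        ring
      simpa using h2.congr' h3
    have := (h1.div (Real.GammaSeq_tendsto_Gamma μ) hΓμ).const_mul (Real.Gamma μ)
    simpa [mul_div_assoc, hΓμ] using this
  apply key.congr'
  filter_upwards [eventually_gt_atTop 0] with n hn
  have hnp : (0:ℝ) < n := by exact_mod_cast hn
  have hseq : Real.GammaSeq μ n = (n : ℝ) ^ μ * (Nat.factorial n) /
      ((μ + n) * ∏ j ∈ Finset.range n, (μ + j)) := by
    rw [Real.GammaSeq, Finset.prod_range_succ]; ring
  have hprodpos : 0 < ∏ j ∈ Finset.range n, (μ + (j : ℝ)) :=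
    Finset.prod_pos fun j _ => by positivity
  rw [gamma_prod μ hμ n, hseq]
  have hpow : (n : ℝ) ^ μ = (n : ℝ) ^ (μ - 1) * n := by
    rw [show μ = (μ - 1) + 1 by ring, Real.rpow_add hnp, Real.rpow_one]
    ring_nf
  have hfp : (0:ℝ) < Nat.factorial n := by positivity
  have hrp : (0:ℝ) < (n : ℝ) ^ (μ - 1) := Real.rpow_pos_of_pos hnp _
  have hμn : (0:ℝ) < μ + n := by positivity
  rw [hpow]
  field_simp

theorem stmt_18 (μ : ℝ) (hμ : 1 < μ) :
    Tendsto (fun n : ℕ =>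
      (Real.Gamma (n + μ) / (Nat.factorial n) *
        ∑ k ∈ Finset.range n, (Nat.factorial k : ℝ) / Real.Gamma (k + 1 + μ)) /
      ((n : ℝ) ^ (μ - 1) / ((μ - 1) * Real.Gamma μ)))
      atTop (nhds 1) := by
  have hΓμ : (0:ℝ) < Real.Gamma μ := Real.Gamma_pos_of_pos (by linarith)
  have hzero : Tendsto (fun n : ℕ => Real.Gamma μ / (n : ℝ) ^ (μ - 1)) atTop (nhds 0) :=
    Tendsto.div_atTop tendsto_const_nhds
      ((tendsto_rpow_atTop (by linarith)).comp tendsto_natCast_atTop_atTop)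
  have key : Tendsto (fun n : ℕ =>
      Real.Gamma (n + μ) / ((Nat.factorial n : ℝ) * (n : ℝ) ^ (μ - 1)) -
        Real.Gamma μ / (n : ℝ) ^ (μ - 1)) atTop (nhds (1 - 0)) :=
    (tendsto_h μ hμ).sub hzero
  have key' : Tendsto (fun n : ℕ =>
      Real.Gamma (n + μ) / ((Nat.factorial n : ℝ) * (n : ℝ) ^ (μ - 1)) -
        Real.Gamma μ / (n : ℝ) ^ (μ - 1)) atTop (nhds 1) := by simpa using key
  apply key'.congr'
  filter_upwards [eventually_gt_atTop 0] with n hn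
  have hnp : (0:ℝ) < n := by exact_mod_cast hn
  have hΓn := gamma_pos_nat μ hμ n
  have hfp : (0:ℝ) < Nat.factorial n := by positivity
  have hrp : (0:ℝ) < (n : ℝ) ^ (μ - 1) := Real.rpow_pos_of_pos hnp _
  have hμ1 : μ - 1 ≠ 0 := by linarith
  rw [telescope μ hμ n]
  field_simp
end
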